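/- Fix d ≥ 1 and consider the condition-length function lc on tuples of control points P = (P₀,…,P_d) ∈ (ℝ²)^{d+1}, defined by lc(P) = ∫₀¹ ‖∂ₜB(P,t)‖ / √|B₁(P,t)² − 4B₂(P,t)| dt, where B(P,t) = Σᵢ₌₀^d C(d,i)(1−t)^{d−i}tⁱ Pᵢ = (B₁(P,t), B₂(P,t)). Then lc is twice continuously differentiable (of class C²) at every point P such that for all t ∈ [0,1] one has ∂ₜB(P,t) ≠ 0 and B₁(P,t)² ≠ 4B₂(P,t), and at such a point its partial derivative with respect to each coordinate P_{i,j} of a control point is obtained by differentiating under the integral sign: ∂lc/∂P_{i,j}(P) = ∫₀¹ ∂/∂P_{i,j} ( ‖∂ₜB(P,t)‖ / √|B₁(P,t)² − 4B₂(P,t)| ) dt. -/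

import Mathlib

/-!
The set of pairs `(P, t)` with `∂ₜB(P,t) ≠ 0` and `B₁(P,t)² ≠ 4B₂(P,t)` is open, and on it the
integrand `‖∂ₜB‖ / √|B₁² − 4B₂|` is smooth in `(P, t)`. The hypotheses say that it contains
`{P} × [0,1]`; as `[0,1]` is compact, it then contains `C × [0,1]` for a compact neighbourhood `C`
of `P`. There the partial derivatives in the parameter of a `C¹` integrand are bounded, so
dominated convergence allows differentiation under the integral sign, and applying this again to
the partial derivative gives `C^n` regularity of the parametric integral.
-/

/-- The degree-`d` Bézier curve in the space `ℝ²` of monic real quadratics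
(identified via `x² + bx + c ↦ (b,c)`), with control points `P₀, …, P_d`. -/
noncomputable def bezier (d : ℕ) (P : Fin (d + 1) → EuclideanSpace ℝ (Fin 2)) (t : ℝ) :
    EuclideanSpace ℝ (Fin 2) :=
  ∑ i : Fin (d + 1), ((d.choose (i : ℕ) : ℝ) * (1 - t) ^ (d - (i : ℕ)) * t ^ (i : ℕ)) • P i

/-- The condition length `lc(P) = ∫₀¹ ‖∂ₜB(P,t)‖ / √|B₁(P,t)² − 4B₂(P,t)| dt`
of the degree-`d` Bézier curve with control points `P`. -/
noncomputable def conditionLength (d : ℕ) (P : Fin (d + 1) → EuclideanSpace ℝ (Fin 2)) : ℝ :=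
  ∫ t in (0:ℝ)..1,
    ‖deriv (bezier d P) t‖ / Real.sqrt |(bezier d P t 0) ^ 2 - 4 * bezier d P t 1|

/-- The family of control points obtained from `P` by replacing the `j`-th coordinate
`P_{i,j}` of the `i`-th control point by `s`. -/
noncomputable def updateCoord (d : ℕ) (P : Fin (d + 1) → EuclideanSpace ℝ (Fin 2))
    (i : Fin (d + 1)) (j : Fin 2) (s : ℝ) : Fin (d + 1) → EuclideanSpace ℝ (Fin 2) :=
  Function.update P i (WithLp.toLp 2 (Function.update (P i) j s))

open Set Filter MeasureTheory
open scoped Interval Topology ContDiff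

section PartialFDeriv

variable {X Y F : Type*} [NormedAddCommGroup X] [NormedSpace ℝ X] [NormedAddCommGroup Y]
  [NormedSpace ℝ Y] [NormedAddCommGroup F] [NormedSpace ℝ F]

noncomputable def partialFDerivFst (G : X × Y → F) (p : X × Y) : X →L[ℝ] F :=
  (fderiv ℝ G p).comp (ContinuousLinearMap.inl ℝ X Y)

theorem DifferentiableAt.hasFDerivAt_partialFDerivFst {G : X × Y → F} {p : X × Y}
    (hG : DifferentiableAt ℝ G p) :
    HasFDerivAt (fun x => G (x, p.2)) (partialFDerivFst G p) p.1 :=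
  hG.hasFDerivAt.comp p.1 (hasFDerivAt_prodMk_left p.1 p.2)

theorem ContDiffOn.partialFDerivFst_of_isOpen {G : X × Y → F} {U : Set (X × Y)}
    {n : WithTop ℕ∞} (hG : ContDiffOn ℝ (n + 1) G U) (hU : IsOpen U) :
    ContDiffOn ℝ n (partialFDerivFst G) U :=
  (hG.fderiv_of_isOpen hU le_rfl).clm_comp contDiffOn_const

end PartialFDeriv

section ParametricIntervalIntegral

variable {X F : Type*} [TopologicalSpace X] [NormedAddCommGroup F] {G : X × ℝ → F}
  {U : Set (X × ℝ)} {a b : ℝ}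

theorem isOpen_setOf_forall_uIcc_prodMk_mem (hU : IsOpen U) :
    IsOpen {x : X | ∀ t ∈ [[a, b]], (x, t) ∈ U} :=
  isOpen_iff_mem_nhds.2 fun _ hx =>
    isCompact_uIcc.eventually_forall_of_forall_eventually fun t ht => hU.mem_nhds (hx t ht)

theorem exists_isCompact_prod_uIcc_subset [LocallyCompactSpace X] (hU : IsOpen U) {x₀ : X}
    (hx₀ : ∀ t ∈ [[a, b]], (x₀, t) ∈ U) : ∃ C ∈ 𝓝 x₀, IsCompact C ∧ C ×ˢ [[a, b]] ⊆ U := by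
  obtain ⟨C, hC, hCU, hCc⟩ :=
    local_compact_nhds ((isOpen_setOf_forall_uIcc_prodMk_mem hU).mem_nhds hx₀)
  exact ⟨C, hC, hCc, fun p hp => hCU hp.1 p.2 hp.2⟩

theorem ContinuousOn.intervalIntegrable_comp_prodMk (hG : ContinuousOn G U) {x : X}
    (hx : ∀ t ∈ [[a, b]], (x, t) ∈ U) : IntervalIntegrable (fun t => G (x, t)) volume a b :=
  (hG.comp (Continuous.continuousOn (by fun_prop)) hx).intervalIntegrable

theorem ContinuousOn.continuousAt_intervalIntegral [LocallyCompactSpace X]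
    [FirstCountableTopology X] [NormedSpace ℝ F] (hU : IsOpen U) (hG : ContinuousOn G U)
    {x₀ : X} (hx₀ : ∀ t ∈ [[a, b]], (x₀, t) ∈ U) :
    ContinuousAt (fun x => ∫ t in a..b, G (x, t)) x₀ := by
  obtain ⟨C, hC, hCc, hCU⟩ := exists_isCompact_prod_uIcc_subset hU hx₀
  obtain ⟨M, hM⟩ := (hCc.prod isCompact_uIcc).exists_bound_of_continuousOn (hG.mono hCU)
  refine intervalIntegral.continuousAt_of_dominated_interval (bound := fun _ => M) ?_ ?_
    intervalIntegrable_const ?_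
  · filter_upwards [hC] with x hx
    exact (hG.intervalIntegrable_comp_prodMk fun t ht => hCU ⟨hx, ht⟩).def'.aestronglyMeasurable
  · filter_upwards [hC] with x hx
    exact ae_of_all _ fun t ht => hM _ ⟨hx, uIoc_subset_uIcc ht⟩
  · refine ae_of_all _ fun t ht => ?_
    exact ContinuousAt.comp (f := fun x => (x, t))
      (hG.continuousAt (hU.mem_nhds (hx₀ t (uIoc_subset_uIcc ht)))) (by fun_prop)

end ParametricIntervalIntegral

section DifferentiationUnderIntegral

variable {X F : Type*} [NormedAddCommGroup X] [NormedSpace ℝ X] [LocallyCompactSpace X]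
  [NormedAddCommGroup F] [NormedSpace ℝ F] {G : X × ℝ → F} {U : Set (X × ℝ)} {a b : ℝ}

theorem ContDiffOn.hasFDerivAt_intervalIntegral (hU : IsOpen U) (hG : ContDiffOn ℝ 1 G U)
    {x₀ : X} (hx₀ : ∀ t ∈ [[a, b]], (x₀, t) ∈ U) :
    HasFDerivAt (fun x => ∫ t in a..b, G (x, t))
      (∫ t in a..b, partialFDerivFst G (x₀, t)) x₀ := by
  have hG' : ContinuousOn (partialFDerivFst G) U :=
    (hG.partialFDerivFst_of_isOpen (n := 0) hU).continuousOn
  obtain ⟨C, hC, hCc, hCU⟩ := exists_isCompact_prod_uIcc_subset hU hx₀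
  obtain ⟨M, hM⟩ := (hCc.prod isCompact_uIcc).exists_bound_of_continuousOn (hG'.mono hCU)
  have hCx : ∀ x ∈ C, ∀ t ∈ [[a, b]], (x, t) ∈ U := fun x hx t ht => hCU ⟨hx, ht⟩
  refine intervalIntegral.hasFDerivAt_integral_of_dominated_of_fderiv_le (bound := fun _ => M)
    (F' := fun x t => partialFDerivFst G (x, t)) hC ?_
    (hG.continuousOn.intervalIntegrable_comp_prodMk hx₀)
    (hG'.intervalIntegrable_comp_prodMk hx₀).def'.aestronglyMeasurable ?_
    intervalIntegrable_const ?_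
  · filter_upwards [hC] with x hx
    exact (hG.continuousOn.intervalIntegrable_comp_prodMk (hCx x hx)).def'.aestronglyMeasurable
  · exact ae_of_all _ fun t ht x hx => hM _ ⟨hx, uIoc_subset_uIcc ht⟩
  · refine ae_of_all _ fun t ht x hx => ?_
    exact ((hG.differentiableOn one_ne_zero).differentiableAt
      (hU.mem_nhds (hCx x hx t (uIoc_subset_uIcc ht)))).hasFDerivAt_partialFDerivFst

theorem ContDiffOn.deriv_intervalIntegral_comp (hU : IsOpen U) (hG : ContDiffOn ℝ 1 G U)
    {γ : ℝ → X} {s₀ : ℝ} (hγ : DifferentiableAt ℝ γ s₀)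
    (hγ₀ : ∀ t ∈ [[a, b]], (γ s₀, t) ∈ U) :
    deriv (fun s => ∫ t in a..b, G (γ s, t)) s₀ =
      ∫ t in a..b, deriv (fun s => G (γ s, t)) s₀ := by
  have hG' : ContinuousOn (partialFDerivFst G) U :=
    (hG.partialFDerivFst_of_isOpen (n := 0) hU).continuousOn
  have hcomp : HasDerivAt (fun s => ∫ t in a..b, G (γ s, t))
      ((∫ t in a..b, partialFDerivFst G (γ s₀, t)) (deriv γ s₀)) s₀ :=
    (hG.hasFDerivAt_intervalIntegral hU hγ₀).comp_hasDerivAt s₀ hγ.hasDerivAt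
  rw [hcomp.deriv,
    ContinuousLinearMap.intervalIntegral_apply (hG'.intervalIntegrable_comp_prodMk hγ₀)]
  refine intervalIntegral.integral_congr fun t ht => ?_
  have hGt : DifferentiableAt ℝ G (γ s₀, t) :=
    (hG.differentiableOn one_ne_zero).differentiableAt (hU.mem_nhds (hγ₀ t ht))
  exact (hGt.hasFDerivAt_partialFDerivFst.comp_hasDerivAt s₀ hγ.hasDerivAt).deriv.symm

end DifferentiationUnderIntegral

universe u

theorem ContDiffOn.intervalIntegral {X F : Type u} [NormedAddCommGroup X] [NormedSpace ℝ X]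
    [LocallyCompactSpace X] [NormedAddCommGroup F] [NormedSpace ℝ F]
    {G : X × ℝ → F} {U : Set (X × ℝ)} {a b : ℝ} {n : ℕ} (hG : ContDiffOn ℝ n G U)
    (hU : IsOpen U) :
    ContDiffOn ℝ n (fun x => ∫ t in a..b, G (x, t)) {x | ∀ t ∈ [[a, b]], (x, t) ∈ U} := by
  -- `X` and `F` share a universe so that the induction can replace `F` by `X →L[ℝ] F`.
  induction n generalizing F with
  | zero =>
    rw [Nat.cast_zero, contDiffOn_zero] at hG ⊢
    exact fun x hx => (hG.continuousAt_intervalIntegral hU hx).continuousWithinAt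
  | succ n ih =>
    have hderiv : ∀ x ∈ {x | ∀ t ∈ [[a, b]], (x, t) ∈ U}, HasFDerivAt
        (fun x => ∫ t in a..b, G (x, t)) (∫ t in a..b, partialFDerivFst G (x, t)) x :=
      fun x hx => (hG.of_le (by exact_mod_cast Nat.le_add_left 1 n)).hasFDerivAt_intervalIntegral
        hU hx
    rw [Nat.cast_succ] at hG ⊢
    rw [contDiffOn_succ_iff_fderiv_of_isOpen (isOpen_setOf_forall_uIcc_prodMk_mem hU)]
    refine ⟨fun x hx => (hderiv x hx).differentiableAt.differentiableWithinAt, by simp, ?_⟩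
    exact (ih (hG.partialFDerivFst_of_isOpen hU)).congr fun x hx => (hderiv x hx).fderiv

section ConditionLength

variable (d : ℕ)

noncomputable def conditionIntegrand (p : (Fin (d + 1) → EuclideanSpace ℝ (Fin 2)) × ℝ) : ℝ :=
  ‖deriv (bezier d p.1) p.2‖ / Real.sqrt |(bezier d p.1 p.2 0) ^ 2 - 4 * bezier d p.1 p.2 1|

def regularLocus : Set ((Fin (d + 1) → EuclideanSpace ℝ (Fin 2)) × ℝ) :=
  {p | deriv (bezier d p.1) p.2 ≠ 0 ∧ (bezier d p.1 p.2 0) ^ 2 ≠ 4 * bezier d p.1 p.2 1}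

theorem contDiff_bezier_uncurry :
    ContDiff ℝ ∞ fun p : (Fin (d + 1) → EuclideanSpace ℝ (Fin 2)) × ℝ => bezier d p.1 p.2 := by
  unfold bezier
  fun_prop

theorem contDiff_bezier_apply_uncurry (j : Fin 2) :
    ContDiff ℝ ∞ fun p : (Fin (d + 1) → EuclideanSpace ℝ (Fin 2)) × ℝ => bezier d p.1 p.2 j :=
  (EuclideanSpace.proj (𝕜 := ℝ) j).contDiff.comp (contDiff_bezier_uncurry d)

theorem contDiff_deriv_bezier_uncurry :
    ContDiff ℝ ∞ fun p : (Fin (d + 1) → EuclideanSpace ℝ (Fin 2)) × ℝ =>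
      deriv (bezier d p.1) p.2 := by
  have h : ContDiff ℝ ∞ (Function.uncurry
      fun (p : (Fin (d + 1) → EuclideanSpace ℝ (Fin 2)) × ℝ) t => bezier d p.1 t) := by
    unfold bezier Function.uncurry
    fun_prop
  exact (h.fderiv contDiff_snd (by simp)).clm_apply contDiff_const

theorem isOpen_regularLocus : IsOpen (regularLocus d) :=
  (isOpen_ne_fun (contDiff_deriv_bezier_uncurry d).continuous continuous_const).inter
    (isOpen_ne_fun ((contDiff_bezier_apply_uncurry d 0).pow 2).continuous
      (contDiff_const.mul (contDiff_bezier_apply_uncurry d 1)).continuous)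

theorem contDiffOn_conditionIntegrand :
    ContDiffOn ℝ ∞ (conditionIntegrand d) (regularLocus d) := by
  rintro p ⟨hderiv, hdisc⟩
  have hdisc' : (bezier d p.1 p.2 0) ^ 2 - 4 * bezier d p.1 p.2 1 ≠ 0 := sub_ne_zero.2 hdisc
  have hsqrt : ContDiffAt ℝ ∞
      (fun q => Real.sqrt |(bezier d q.1 q.2 0) ^ 2 - 4 * bezier d q.1 q.2 1|) p :=
    ((((contDiff_bezier_apply_uncurry d 0).pow 2).sub (contDiff_const.mul
      (contDiff_bezier_apply_uncurry d 1))).contDiffAt.abs hdisc').sqrt (abs_ne_zero.2 hdisc')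
  exact (((contDiff_deriv_bezier_uncurry d).contDiffAt.norm ℝ hderiv).div hsqrt
    (Real.sqrt_ne_zero'.2 (abs_pos.2 hdisc'))).contDiffWithinAt

theorem differentiableAt_updateCoord (P : Fin (d + 1) → EuclideanSpace ℝ (Fin 2))
    (i : Fin (d + 1)) (j : Fin 2) (s : ℝ) : DifferentiableAt ℝ (updateCoord d P i j) s :=
  (hasFDerivAt_update P _).differentiableAt.comp s
    ((PiLp.continuousLinearEquiv 2 ℝ fun _ : Fin 2 => ℝ).symm.differentiableAt.comp s
      (hasFDerivAt_update (𝕜 := ℝ) (P i).ofLp (i := j) s).differentiableAt)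

theorem updateCoord_self (P : Fin (d + 1) → EuclideanSpace ℝ (Fin 2)) (i : Fin (d + 1))
    (j : Fin 2) : updateCoord d P i j (P i j) = P := by
  simp [updateCoord]

end ConditionLength

theorem stmt_6_general (d : ℕ) (P : Fin (d + 1) → EuclideanSpace ℝ (Fin 2))
    (h₁ : ∀ t ∈ Set.Icc (0:ℝ) 1, deriv (bezier d P) t ≠ 0)
    (h₂ : ∀ t ∈ Set.Icc (0:ℝ) 1, (bezier d P t 0) ^ 2 ≠ 4 * bezier d P t 1) :
    ContDiffAt ℝ 2 (conditionLength d) P ∧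
      ∀ (i : Fin (d + 1)) (j : Fin 2),
        deriv (fun s : ℝ => conditionLength d (updateCoord d P i j s)) (P i j) =
          ∫ t in (0:ℝ)..1,
            deriv
              (fun s : ℝ =>
                ‖deriv (bezier d (updateCoord d P i j s)) t‖ /
                  Real.sqrt
                    |(bezier d (updateCoord d P i j s) t 0) ^ 2 -
                      4 * bezier d (updateCoord d P i j s) t 1|)
              (P i j) := by
  have hP : ∀ t ∈ [[(0:ℝ), 1]], (P, t) ∈ regularLocus d := fun t ht => by
    rw [uIcc_of_le zero_le_one] at ht
    exact ⟨h₁ t ht, h₂ t ht⟩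
  have hG : ContDiffOn ℝ (2 : ℕ) (conditionIntegrand d) (regularLocus d) :=
    (contDiffOn_conditionIntegrand d).of_le (WithTop.coe_le_coe.2 le_top)
  refine ⟨?_, fun i j => ?_⟩
  · exact (hG.intervalIntegral (isOpen_regularLocus d)).contDiffAt
      ((isOpen_setOf_forall_uIcc_prodMk_mem (isOpen_regularLocus d)).mem_nhds hP)
  · have hγ₀ : ∀ t ∈ [[(0:ℝ), 1]], (updateCoord d P i j (P i j), t) ∈ regularLocus d := by
      rwa [updateCoord_self]
    exact (hG.of_le (by norm_num)).deriv_intervalIntegral_comp (isOpen_regularLocus d)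
      (differentiableAt_updateCoord d P i j (P i j)) hγ₀

/-- At every tuple of control points `P` such that for all `t ∈ [0,1]` one has
`∂ₜB(P,t) ≠ 0` and `B₁(P,t)² ≠ 4B₂(P,t)`, the condition-length function `lc` is twice
continuously differentiable in the coordinates of `P`, and its partial derivative with
respect to each coordinate `P_{i,j}` is obtained by differentiating under the
integral sign. -/
theorem stmt_6 (d : ℕ) (hd : 1 ≤ d) (P : Fin (d + 1) → EuclideanSpace ℝ (Fin 2))
    (h₁ : ∀ t ∈ Set.Icc (0:ℝ) 1, deriv (bezier d P) t ≠ 0)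
    (h₂ : ∀ t ∈ Set.Icc (0:ℝ) 1, (bezier d P t 0) ^ 2 ≠ 4 * bezier d P t 1) :
    ContDiffAt ℝ 2 (conditionLength d) P ∧
      ∀ (i : Fin (d + 1)) (j : Fin 2),
        deriv (fun s : ℝ => conditionLength d (updateCoord d P i j s)) (P i j) =
          ∫ t in (0:ℝ)..1,
            deriv
              (fun s : ℝ =>
                ‖deriv (bezier d (updateCoord d P i j s)) t‖ /
                  Real.sqrt
                    |(bezier d (updateCoord d P i j s) t 0) ^ 2 -
                      4 * bezier d (updateCoord d P i j s) t 1|)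
              (P i j) :=
  stmt_6_general d P h₁ h₂
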